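/- arXiv:2206.01672 — 3 statements merged into one kernel-verified Lean document; each statement's English description precedes it below -/
import Mathlib

section
/- A quadratic normalisation (A, N) is of left-class m if and only if N̄_{12[m]} = N̄_{12[m+1]} = N̄_{21[m+1]} on A³, where 12[k] denotes the alternating sequence 1,2,1,... of length k and 21[k] the alternating sequence 2,1,2,... of length k. -/
/-- Apply `N` to the length-two factor of `w` at positions `i, i+1` (1-indexed). -/
def applyAt {A : Type*} (N : List A → List A) (i : ℕ) (w : List A) : List A :=
  w.take (i - 1) ++ N ((w.drop (i - 1)).take 2) ++ w.drop (i + 1)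

/-- Apply `N` to length-two factors at the given sequence of positions,
leftmost position in the list applied first. -/
def applySeq {A : Type*} (N : List A → List A) (pos : List ℕ) (w : List A) : List A :=
  pos.foldl (fun v i => applyAt N i v) w

/-- The alternating sequence of positions `s, 3-s, s, ...` of length `k` (with `s ∈ {1,2}`). -/
def altSeq : ℕ → ℕ → List ℕ
  | _, 0 => []
  | s, k + 1 => s :: altSeq (3 - s) k

/-- A quadratic normalisation: a length-preserving map, identity on letters,
satisfying `N(u|v|w) = N(u|N(v)|w)`, for which a word is normal iff all its
length-two factors are, and which is computed by finitely many applications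
of its restriction to length-two factors. -/
structure QuadraticNormalisation {A : Type*} (N : List A → List A) : Prop where
  len : ∀ w : List A, (N w).length = w.length
  letter : ∀ a : A, N [a] = [a]
  mid : ∀ u v w : List A, N (u ++ v ++ w) = N (u ++ N v ++ w)
  normal_iff : ∀ w : List A, N w = w ↔
    ∀ (u v : List A) (a b : A), w = u ++ a :: b :: v → N [a, b] = [a, b]
  reach : ∀ w : List A, ∃ pos : List ℕ, N w = applySeq N pos w

/-- The normalisation is of left-class `m`. -/
def LeftClass {A : Type*} (N : List A → List A) (m : ℕ) : Prop :=
  ∀ w : List A, w.length = 3 → N w = applySeq N (altSeq 1 m) w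

/-- The normalisation is of right-class `n`. -/
def RightClass {A : Type*} (N : List A → List A) (n : ℕ) : Prop :=
  ∀ w : List A, w.length = 3 → N w = applySeq N (altSeq 2 n) w

/-- The normalisation is of class `(m, n)`. -/
def IsClass {A : Type*} (N : List A → List A) (m n : ℕ) : Prop :=
  LeftClass N m ∧ RightClass N n

/-- `e` is an `N`-neutral element: `N(w|e) = N(e|w) = N(w)|e` for every word `w`. -/
def Neutral {A : Type*} (N : List A → List A) (e : A) : Prop :=
  ∀ w : List A, N (w ++ [e]) = N w ++ [e] ∧ N (e :: w) = N w ++ [e]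

/-!
Every `N̄_i` with `i ≥ 1` is idempotent and preserves `N`, and a word of length three is normal
iff it is fixed by `N̄_1` and `N̄_2`. If `N = N̄_{12[m]}` on `A³`, one more step fixes the normal
form, and `N̄_{21[m+1]} = N̄_{12[m]} ∘ N̄_2 = N ∘ N̄_2 = N`. Conversely, `N̄_{12[m]}(w)` is fixed by
the last position of `12[m]` (by idempotence, or by the hypothesis on `21[1]` when `m = 0`) and by
the next one (the hypothesis on `12[m+1]`), so it is normal, and it has the normal form of `w`.
-/

theorem take_append_take_drop {A : Type*} {i : ℕ} (hi : 1 ≤ i) (w : List A) :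
    w.take (i - 1) ++ (w.drop (i - 1)).take 2 ++ w.drop (i + 1) = w := by
  rw [List.append_assoc, show i + 1 = i - 1 + 2 by omega, ← List.drop_drop,
    List.take_append_drop, List.take_append_drop]

theorem applyAt_eq_self_iff {A : Type*} {N : List A → List A} {i : ℕ} (hi : 1 ≤ i)
    (w : List A) :
    applyAt N i w = w ↔ N ((w.drop (i - 1)).take 2) = (w.drop (i - 1)).take 2 := by
  conv_lhs => rhs; rw [← take_append_take_drop hi w]
  simp [applyAt]

theorem applySeq_append {A : Type*} {N : List A → List A} (p q : List ℕ) (w : List A) :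
    applySeq N (p ++ q) w = applySeq N q (applySeq N p w) :=
  List.foldl_append

theorem altSeq_succ {s : ℕ} (hs : s ≤ 3) (k : ℕ) :
    altSeq s (k + 1) = altSeq s k ++ [if Even k then s else 3 - s] := by
  induction k generalizing s with
  | zero => rfl
  | succ k ih =>
    rw [altSeq, ih (by omega), altSeq, List.cons_append]
    congr 3
    simp only [Nat.even_add_one]
    split_ifs <;> omega

theorem one_le_of_mem_altSeq {s k i : ℕ} (hs : 1 ≤ s) (hs' : s ≤ 2) (hi : i ∈ altSeq s k) :
    1 ≤ i := by
  induction k generalizing s with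
  | zero => simp [altSeq] at hi
  | succ k ih =>
    rcases List.mem_cons.1 hi with rfl | hi
    · exact hs
    · exact ih (by omega) (by omega) hi

namespace QuadraticNormalisation

variable {A : Type*} {N : List A → List A} {i : ℕ}

theorem idem (hN : QuadraticNormalisation N) (w : List A) : N (N w) = N w := by
  simpa using (hN.mid [] w []).symm

theorem eq_self_of_length_le_one (hN : QuadraticNormalisation N) {w : List A}
    (hw : w.length ≤ 1) : N w = w := by
  rw [hN.normal_iff]
  rintro u v a b rfl
  simp at hw
  omega

theorem eq_self_of_infix (hN : QuadraticNormalisation N) {w x : List A} (hw : N w = w)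
    (hx : x <:+: w) : N x = x := by
  obtain ⟨s, t, rfl⟩ := hx
  rw [hN.normal_iff] at hw ⊢
  rintro u v a b rfl
  exact hw (s ++ u) (v ++ t) a b (by simp)

theorem N_applyAt (hN : QuadraticNormalisation N) (hi : 1 ≤ i) (w : List A) :
    N (applyAt N i w) = N w := by
  conv_rhs => rw [← take_append_take_drop hi w]
  exact (hN.mid _ _ _).symm

theorem length_applyAt (hN : QuadraticNormalisation N) (hi : 1 ≤ i) (w : List A) :
    (applyAt N i w).length = w.length := by
  conv_rhs => rw [← take_append_take_drop hi w]
  simp only [applyAt, List.length_append, hN.len]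

theorem applyAt_applyAt (hN : QuadraticNormalisation N) (hi : 1 ≤ i) (w : List A) :
    applyAt N i (applyAt N i w) = applyAt N i w := by
  rcases le_or_gt (i + 1) w.length with h | h
  · have hx : ((w.drop (i - 1)).take 2).length = 2 := by simp; omega
    have hp : (w.take (i - 1)).length = i - 1 := by simp; omega
    rw [applyAt_eq_self_iff hi]
    simp only [applyAt]
    rw [List.append_assoc, List.drop_left' hp, List.take_left' (by rw [hN.len, hx]), hN.idem]
  · have hw := (applyAt_eq_self_iff hi w).2 (hN.eq_self_of_length_le_one (by simp; omega))
    rw [hw, hw]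

theorem applyAt_eq_self_of_eq_self (hN : QuadraticNormalisation N) (hi : 1 ≤ i) {w : List A}
    (hw : N w = w) : applyAt N i w = w :=
  (applyAt_eq_self_iff hi w).2 <| hN.eq_self_of_infix hw <|
    (List.take_prefix _ _).isInfix.trans (List.drop_suffix _ _).isInfix

theorem eq_self_of_forall_applyAt (hN : QuadraticNormalisation N) {w : List A}
    (h : ∀ i, 1 ≤ i → i + 1 ≤ w.length → applyAt N i w = w) : N w = w := by
  rw [hN.normal_iff]
  rintro u v a b rfl
  have hu := h (u.length + 1) (by omega) (by simp)
  rw [applyAt_eq_self_iff (by omega)] at hu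
  simpa using hu

theorem eq_self_of_applyAt_one_of_applyAt_two (hN : QuadraticNormalisation N) {w : List A}
    (hw : w.length = 3) (h₁ : applyAt N 1 w = w) (h₂ : applyAt N 2 w = w) : N w = w := by
  refine hN.eq_self_of_forall_applyAt fun i hi hi' => ?_
  obtain rfl | rfl : i = 1 ∨ i = 2 := by omega
  exacts [h₁, h₂]

theorem N_applySeq (hN : QuadraticNormalisation N) {p : List ℕ} (hp : ∀ i ∈ p, 1 ≤ i)
    (w : List A) : N (applySeq N p w) = N w := by
  induction p generalizing w with
  | nil => rfl
  | cons i p ih =>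
    rw [List.forall_mem_cons] at hp
    exact (ih hp.2 _).trans (hN.N_applyAt hp.1 w)

theorem length_applySeq (hN : QuadraticNormalisation N) {p : List ℕ} (hp : ∀ i ∈ p, 1 ≤ i)
    (w : List A) : (applySeq N p w).length = w.length := by
  induction p generalizing w with
  | nil => rfl
  | cons i p ih =>
    rw [List.forall_mem_cons] at hp
    exact (ih hp.2 _).trans (hN.length_applyAt hp.1 w)

theorem applyAt_applySeq_altSeq (hN : QuadraticNormalisation N) {s : ℕ} (hs : 1 ≤ s)
    (hs' : s ≤ 2) (k : ℕ) (w : List A) :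
    applyAt N (if Even k then s else 3 - s) (applySeq N (altSeq s (k + 1)) w) =
      applySeq N (altSeq s (k + 1)) w := by
  rw [altSeq_succ (by omega), applySeq_append]
  exact hN.applyAt_applyAt (by split_ifs <;> omega) _

theorem eq_applySeq_altSeq_of_applySeq_eq (hN : QuadraticNormalisation N) {m : ℕ}
    {w : List A} (hw : w.length = 3)
    (h₁ : applySeq N (altSeq 1 m) w = applySeq N (altSeq 1 (m + 1)) w)
    (h₂ : applySeq N (altSeq 1 m) w = applySeq N (altSeq 2 (m + 1)) w) :
    N w = applySeq N (altSeq 1 m) w := by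
  have hpos : ∀ i ∈ altSeq 1 m, 1 ≤ i := fun i => one_le_of_mem_altSeq le_rfl one_le_two
  have hfix : applyAt N 1 (applySeq N (altSeq 1 m) w) = applySeq N (altSeq 1 m) w ∧
      applyAt N 2 (applySeq N (altSeq 1 m) w) = applySeq N (altSeq 1 m) w := by
    cases m with
    | zero => exact ⟨h₁.symm, h₂.symm⟩
    | succ k =>
      have hk := hN.applyAt_applySeq_altSeq le_rfl one_le_two k w
      rw [altSeq_succ (by norm_num) (k + 1), applySeq_append] at h₁
      by_cases hk' : Even k
      · simp only [hk', Nat.even_add_one, not_true_eq_false, if_true, if_false] at hk h₁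
        exact ⟨hk, h₁.symm⟩
      · simp only [hk', Nat.even_add_one, not_false_eq_true, if_true, if_false] at hk h₁
        exact ⟨h₁.symm, hk⟩
  rw [← hN.N_applySeq hpos w]
  exact hN.eq_self_of_applyAt_one_of_applyAt_two ((hN.length_applySeq hpos w).trans hw)
    hfix.1 hfix.2

end QuadraticNormalisation

/-- a quadratic normalisation is of left-class `m` iff
`N̄_{12[m]} = N̄_{12[m+1]} = N̄_{21[m+1]}` on length-three words. -/
theorem leftClass_iff {A : Type*} (N : List A → List A)
    (hN : QuadraticNormalisation N) (m : ℕ) :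
    LeftClass N m ↔
      ∀ w : List A, w.length = 3 →
        applySeq N (altSeq 1 m) w = applySeq N (altSeq 1 (m + 1)) w ∧
        applySeq N (altSeq 1 m) w = applySeq N (altSeq 2 (m + 1)) w := by
  refine ⟨fun hL w hw => ⟨?_, ?_⟩, fun h w hw => hN.eq_applySeq_altSeq_of_applySeq_eq hw
    (h w hw).1 (h w hw).2⟩
  · rw [altSeq_succ (by norm_num), applySeq_append, ← hL w hw]
    exact (hN.applyAt_eq_self_of_eq_self (by split_ifs <;> norm_num) (hN.idem w)).symm
  · have hw₂ : (applyAt N 2 w).length = 3 := (hN.length_applyAt one_le_two w).trans hw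
    change _ = applySeq N (altSeq 1 m) (applyAt N 2 w)
    rw [← hL w hw, ← hL _ hw₂, hN.N_applyAt one_le_two]
end

section
/- If F : A² → A² is an idempotent map satisfying F_{1212} = F_{212} = F_{2121} on A³, then there exists a quadratic normalisation (A, N) of class (4,3) with N̄ = F. -/
/-- Apply `F` to the first two components of a triple. -/
def app1 {X : Type*} (F : X × X → X × X) : X × X × X → X × X × X :=
  fun x => ((F (x.1, x.2.1)).1, (F (x.1, x.2.1)).2, x.2.2)

/-- Apply `F` to the last two components of a triple. -/
def app2 {X : Type*} (F : X × X → X × X) : X × X × X → X × X × X :=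
  fun x => (x.1, (F (x.2.1, x.2.2)).1, (F (x.2.1, x.2.2)).2)

/-- `F_{212}`, i.e. `F₂ F₁ F₂` (position 2 applied first). -/
def C212 {X : Type*} (F : X × X → X × X) : X × X × X → X × X × X :=
  app2 F ∘ app1 F ∘ app2 F

/-- `F_{2121}`, i.e. `F₁ F₂ F₁ F₂` (position 2 applied first). -/
def C2121 {X : Type*} (F : X × X → X × X) : X × X × X → X × X × X :=
  app1 F ∘ C212 F

/-- `F_{1212}`, i.e. `F₂ F₁ F₂ F₁` (position 1 applied first). -/
def C1212 {X : Type*} (F : X × X → X × X) : X × X × X → X × X × X :=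
  C212 F ∘ app1 F

set_option linter.unusedSectionVars false
namespace Scratch

variable {A : Type*} (F : A × A → A × A)

/-- left sweep: prepend a letter, applying F left to right. -/
def lsw : A → List A → List A
  | a, [] => [a]
  | a, b :: t => (F (a, b)).1 :: lsw (F (a, b)).2 t

/-- The normalisation map. -/
def NN (w : List A) : List A := w.foldr (lsw F) []

@[simp] lemma NN_nil : NN F ([] : List A) = [] := rfl
@[simp] lemma NN_cons (a : A) (t : List A) : NN F (a :: t) = lsw F a (NN F t) := rfl

@[simp] lemma lsw_nil (a : A) : lsw F a [] = [a] := rfl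
@[simp] lemma lsw_cons (a b : A) (t : List A) :
    lsw F a (b :: t) = (F (a, b)).1 :: lsw F (F (a, b)).2 t := rfl

lemma lsw_length (a : A) (m : List A) : (lsw F a m).length = m.length + 1 := by
  induction m generalizing a with
  | nil => rfl
  | cons b t ih => simp [ih]

lemma NN_length (w : List A) : (NN F w).length = w.length := by
  induction w with
  | nil => rfl
  | cons a t ih => simp [lsw_length, ih]

section hyps
variable (hidem : ∀ p : A × A, F (F p) = F p)
  (h : ∀ x : A × A × A, C1212 F x = C212 F x ∧ C2121 F x = C212 F x)
include hidem h

lemma key1 (z : A × A × A) : C212 F (app1 F z) = C212 F z := (h z).1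
lemma key2 (z : A × A × A) : app1 F (C212 F z) = C212 F z := (h z).2

/-- two-letter sweep only depends on F of the pair -/
lemma sweep2 (m : List A) : ∀ p q : A × A, F p = F q →
    lsw F p.1 (lsw F p.2 m) = lsw F q.1 (lsw F q.2 m) := by
  induction m with
  | nil =>
    intro p q hpq
    simp only [lsw_nil, lsw_cons, Prod.mk.eta, hpq]
  | cons c m' ih =>
    intro p q hpq
    obtain ⟨a, b⟩ := p
    obtain ⟨a2, b2⟩ := q
    have hC : C212 F (a, b, c) = C212 F (a2, b2, c) := by
      have h1 : app1 F (a, b, c) = app1 F (a2, b2, c) := by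
        simp only [app1, hpq]
      rw [← key1 F hidem h (a, b, c), h1, key1 F hidem h (a2, b2, c)]
    have e : app2 F (app1 F (app2 F (a, b, c))) = app2 F (app1 F (app2 F (a2, b2, c))) := hC
    set t := app1 F (app2 F (a, b, c)) with ht
    set s := app1 F (app2 F (a2, b2, c)) with hs
    have e1 : t.1 = s.1 := congrArg (fun z => z.1) e
    have e2 : F (t.2.1, t.2.2) = F (s.2.1, s.2.2) := by
      have := congrArg Prod.snd e
      simp only [app2] at this
      exact Prod.ext (congrArg Prod.fst this) (congrArg Prod.snd this)
    have comp : ∀ x y : A, lsw F x (lsw F y (c :: m')) =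
        (app1 F (app2 F (x, y, c))).1 ::
          lsw F (app1 F (app2 F (x, y, c))).2.1 (lsw F (app1 F (app2 F (x, y, c))).2.2 m') := by
      intro x y
      simp [lsw, app1, app2]
    show lsw F a (lsw F b (c :: m')) = lsw F a2 (lsw F b2 (c :: m'))
    rw [comp a b, comp a2 b2, ← ht, ← hs, e1]
    congr 1
    exact ih (t.2.1, t.2.2) (s.2.1, s.2.2) e2

/-- sweeping preserves normality -/
lemma chain_lsw : ∀ m : List A, List.Chain' (fun x y => F (x, y) = (x, y)) m →
    ∀ a : A, List.Chain' (fun x y => F (x, y) = (x, y)) (lsw F a m) := by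
  intro m
  induction m with
  | nil => intro _ a; simp [List.Chain']
  | cons b m' ih =>
    intro hm a
    have hm' : List.Chain' (fun x y => F (x, y) = (x, y)) m' := hm.tail
    rw [lsw_cons]
    cases m' with
    | nil =>
      simp only [lsw_nil, List.Chain', List.isChain_cons_cons, List.isChain_singleton, and_true]
      simpa using hidem (a, b)
    | cons c t =>
      have hbc : F (b, c) = (b, c) := (List.isChain_cons_cons.mp hm).1
      rw [lsw_cons]; unfold List.Chain'; rw [List.isChain_cons_cons]
      constructor
      · -- R (F(a,b)).1 (F((F(a,b)).2, c)).1
        have h2 : app2 F (a, b, c) = (a, b, c) := by simp [app2, hbc]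
        have hc : C212 F (a, b, c) = app2 F (app1 F (a, b, c)) := by
          rw [C212]; simp [h2]
        have hk := key2 F hidem h (a, b, c)
        rw [hc] at hk
        -- hk : app1 F (app2 F (app1 F (a,b,c))) = app2 F (app1 F (a,b,c))
        simp only [app1, app2] at hk
        exact Prod.ext (congrArg (fun z => z.1) hk) (congrArg (fun z => z.2.1) hk)
      · rw [← lsw_cons]
        exact ih hm' (F (a, b)).2

lemma chain_NN (w : List A) : List.Chain' (fun x y => F (x, y) = (x, y)) (NN F w) := by
  induction w with
  | nil => simp [List.Chain']
  | cons a t ih => exact chain_lsw F hidem h (NN F t) ih a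

lemma lsw_of_chain : ∀ (m : List A) (a : A),
    List.Chain' (fun x y => F (x, y) = (x, y)) (a :: m) → lsw F a m = a :: m := by
  intro m
  induction m with
  | nil => intro a _; rfl
  | cons b t ih =>
    intro a hm
    have hab : F (a, b) = (a, b) := (List.isChain_cons_cons.mp hm).1
    rw [lsw_cons, hab]
    simp only [List.cons.injEq, true_and]
    exact ih b hm.tail

lemma NN_of_chain (w : List A) (hw : List.Chain' (fun x y => F (x, y) = (x, y)) w) :
    NN F w = w := by
  induction w with
  | nil => rfl
  | cons a t ih =>
    rw [NN_cons, ih hw.tail]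
    exact lsw_of_chain F hidem h t a hw

/-- commutation of sweep with foldr -/
lemma sweep_foldr (z : List A) : ∀ (a : A) (u : List A),
    List.foldr (lsw F) u (lsw F a z) = lsw F a (List.foldr (lsw F) u z) := by
  induction z with
  | nil => intro a u; simp
  | cons b z' ih =>
    intro a u
    rw [lsw_cons, List.foldr_cons, ih, List.foldr_cons]
    exact sweep2 F hidem h (List.foldr (lsw F) u z') (F (a, b)) (a, b) (hidem (a, b))

lemma foldr_NN (v : List A) (u : List A) :
    List.foldr (lsw F) u (List.foldr (lsw F) [] v) = List.foldr (lsw F) u v := by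
  induction v generalizing u with
  | nil => rfl
  | cons a t ih =>
    rw [List.foldr_cons, List.foldr_cons, sweep_foldr F hidem h, ih]

lemma NN_mid (u v w : List A) : NN F (u ++ v ++ w) = NN F (u ++ NN F v ++ w) := by
  unfold NN
  simp only [List.foldr_append]
  rw [foldr_NN F hidem h]

end hyps

/-- chain' iff all factors fixed -/
lemma chain'_iff_factors (R : A → A → Prop) (w : List A) :
    List.Chain' R w ↔ ∀ (u v : List A) (a b : A), w = u ++ a :: b :: v → R a b := by
  constructor
  · intro hw u v a b huv
    subst huv
    have : List.Chain' R (a :: b :: v) := hw.suffix ⟨u, rfl⟩ |>.imp fun _ _ => id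
    exact (List.isChain_cons_cons.mp this).1
  · induction w with
    | nil => intro _; simp [List.Chain']
    | cons a t ih =>
      intro hf
      cases t with
      | nil => simp [List.Chain']
      | cons b t' =>
        unfold List.Chain'; rw [List.isChain_cons_cons]
        refine ⟨hf [] t' a b rfl, ih fun u v x y huv => hf (a :: u) v x y (by rw [huv]; rfl)⟩


section reach
variable {B : Type*} (N : List B → List B)

lemma applyAt_shift (i : ℕ) (hi : 1 ≤ i) (a : B) (v : List B) :
    applyAt N (i + 1) (a :: v) = a :: applyAt N i v := by
  obtain ⟨j, rfl⟩ : ∃ j, i = j + 1 := ⟨i - 1, (Nat.succ_pred_eq_of_pos hi).symm⟩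
  simp [applyAt]

@[simp] lemma applySeq_nil (w : List B) : applySeq N [] w = w := rfl

@[simp] lemma applySeq_cons (i : ℕ) (pos : List ℕ) (w : List B) :
    applySeq N (i :: pos) w = applySeq N pos (applyAt N i w) := rfl

lemma applySeq_append (p q : List ℕ) (w : List B) :
    applySeq N (p ++ q) w = applySeq N q (applySeq N p w) :=
  List.foldl_append

lemma applySeq_shift (pos : List ℕ) (hpos : ∀ i ∈ pos, 1 ≤ i) (a : B) (v : List B) :
    applySeq N (pos.map (· + 1)) (a :: v) = a :: applySeq N pos v := by
  induction pos generalizing v with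
  | nil => rfl
  | cons i p ih =>
    rw [List.map_cons, applySeq_cons, applySeq_cons,
      applyAt_shift N i (hpos i (by simp)) a v]
    exact ih (fun j hj => hpos j (by simp [hj])) _

end reach

lemma range'_shift (s k : ℕ) : List.range' (s + 1) k = (List.range' s k).map (· + 1) := by
  induction k generalizing s with
  | zero => rfl
  | succ n ih => rw [List.range'_succ, List.range'_succ, List.map_cons, ← ih]

variable (hidem : ∀ p : A × A, F (F p) = F p)
  (h : ∀ x : A × A × A, C1212 F x = C212 F x ∧ C2121 F x = C212 F x)
include hidem h

lemma NN_pair (a b : A) : NN F [a, b] = [(F (a, b)).1, (F (a, b)).2] := rfl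

lemma applyAt_one (a b : A) (t : List A) :
    applyAt (NN F) 1 (a :: b :: t) = (F (a, b)).1 :: (F (a, b)).2 :: t := by
  simp [applyAt, NN, lsw]

lemma sweep_applySeq : ∀ (v : List A) (a : A),
    applySeq (NN F) (List.range' 1 v.length) (a :: v) = lsw F a v := by
  intro v
  induction v with
  | nil => intro a; rfl
  | cons b t ih =>
    intro a
    rw [List.length_cons, List.range'_succ, applySeq_cons,
      applyAt_one F hidem h a b t, show (1:ℕ) + 1 = 2 from rfl, range'_shift,
      applySeq_shift _ _ (fun i hi => by
        rcases List.mem_range'.mp hi with ⟨hle, _⟩; omega),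
      ih, lsw_cons]

/-- positions realising the normalisation -/
def posFor : List A → List ℕ
  | [] => []
  | _ :: t => (posFor t).map (· + 1) ++ List.range' 1 t.length

lemma posFor_pos : ∀ w : List A, ∀ i ∈ posFor w, 1 ≤ i := by
  intro w
  induction w with
  | nil => simp [posFor]
  | cons a t ih =>
    intro i hi
    rw [posFor, List.mem_append] at hi
    rcases hi with hi | hi
    · rcases List.mem_map.mp hi with ⟨j, _, rfl⟩; omega
    · rcases List.mem_range'.mp hi with ⟨hle, _⟩; omega

lemma NN_reach : ∀ w : List A, NN F w = applySeq (NN F) (posFor w) w := by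
  intro w
  induction w with
  | nil => rfl
  | cons a t ih =>
    rw [posFor, applySeq_append, applySeq_shift _ _ (posFor_pos F hidem h t), ← ih,
      show t.length = (NN F t).length from (NN_length F t).symm,
      sweep_applySeq F hidem h, NN_cons]

/-- triple to list -/
def toL (x : A × A × A) : List A := [x.1, x.2.1, x.2.2]

lemma NN_toL (x : A × A × A) : NN F (toL x) = toL (C212 F x) := by
  obtain ⟨a, b, c⟩ := x
  simp [toL, NN, lsw, C212, app1, app2]

lemma applyAt_one_toL (x : A × A × A) : applyAt (NN F) 1 (toL x) = toL (app1 F x) := by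
  obtain ⟨a, b, c⟩ := x
  simp [toL, applyAt, NN, lsw, app1]

lemma applyAt_two_toL (x : A × A × A) : applyAt (NN F) 2 (toL x) = toL (app2 F x) := by
  obtain ⟨a, b, c⟩ := x
  simp [toL, applyAt, NN, lsw, app2]

lemma seq212 (x : A × A × A) : applySeq (NN F) [2, 1, 2] (toL x) = toL (C212 F x) := by
  rw [applySeq_cons, applyAt_two_toL F hidem h, applySeq_cons, applyAt_one_toL F hidem h,
    applySeq_cons, applyAt_two_toL F hidem h, applySeq_nil]
  rfl

lemma seq1212 (x : A × A × A) : applySeq (NN F) [1, 2, 1, 2] (toL x) = toL (C1212 F x) := by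
  rw [applySeq_cons, applyAt_one_toL F hidem h]
  exact seq212 F hidem h (app1 F x)


lemma NN_normal_iff (w : List A) : NN F w = w ↔
    ∀ (u v : List A) (a b : A), w = u ++ a :: b :: v → NN F [a, b] = [a, b] := by
  constructor
  · intro hw u v a b huv
    have hc : List.Chain' (fun x y => F (x, y) = (x, y)) w := hw ▸ chain_NN F hidem h w
    have hab := (chain'_iff_factors (fun x y => F (x, y) = (x, y)) w).mp hc u v a b huv
    rw [NN_pair F hidem h, hab]
  · intro hf
    apply NN_of_chain F hidem h
    apply (chain'_iff_factors _ w).mpr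
    intro u v a b huv
    have := hf u v a b huv
    rw [NN_pair F hidem h] at this
    exact Prod.ext (by injection this) (by injection this with _ h2; injection h2)

lemma NN_isClass : IsClass (NN F) 4 3 := by
  constructor
  · intro w hw
    obtain ⟨a, b, c, rfl⟩ := List.length_eq_three.mp hw
    show NN F (toL (a, b, c)) = applySeq (NN F) [1, 2, 1, 2] (toL (a, b, c))
    rw [seq1212 F hidem h, NN_toL F hidem h, (h (a, b, c)).1]
  · intro w hw
    obtain ⟨a, b, c, rfl⟩ := List.length_eq_three.mp hw
    show NN F (toL (a, b, c)) = applySeq (NN F) [2, 1, 2] (toL (a, b, c))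
    rw [seq212 F hidem h, NN_toL F hidem h]

end Scratch

/-- every idempotent map `F : A² → A²` with
`F_{1212} = F_{212} = F_{2121}` on `A³` arises as the restriction to length-two
words of a quadratic normalisation of class `(4,3)`. -/
theorem idempotent_F_gives_class43 {A : Type*} (F : A × A → A × A)
    (hidem : ∀ p : A × A, F (F p) = F p)
    (h : ∀ x : A × A × A, C1212 F x = C212 F x ∧ C2121 F x = C212 F x) :
    ∃ N : List A → List A, QuadraticNormalisation N ∧ IsClass N 4 3 ∧
      ∀ a b : A, N [a, b] = [(F (a, b)).1, (F (a, b)).2] := by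
  refine ⟨Scratch.NN F, ⟨Scratch.NN_length F, fun a => rfl, Scratch.NN_mid F hidem h,
    Scratch.NN_normal_iff F hidem h, fun w => ⟨Scratch.posFor w, Scratch.NN_reach F hidem h w⟩⟩,
    Scratch.NN_isClass F hidem h, fun a b => Scratch.NN_pair F hidem h a b⟩
end

section
/- If (M, S, η) is a factorable monoid, then the quadratic normalisation (S, N_φ′) corresponding to η is of class (5,4). -/
/-- Apply `phi` to pairs of adjacent letters, sweeping from left to right:
`sweep phi = phi_{|w|-1} ... phi_2 phi_1`. -/
def sweep {A : Type*} (phi : A × A → A × A) : List A → List A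
  | [] => []
  | [a] => [a]
  | a :: b :: rest => (phi (a, b)).1 :: sweep phi ((phi (a, b)).2 :: rest)

/-- `N` satisfies the defining recursion of the normalisation map `N_phi`
associated to `phi`, with distinguished element `one`. -/
def IsNormMap {A : Type*} (one : A) (phi : A × A → A × A) (N : List A → List A) : Prop :=
  N [] = [] ∧
  (∀ u v : List A, N (u ++ one :: v) = N (u ++ v)) ∧
  ∀ (s : A) (w : List A),
    (one ∈ sweep phi (s :: N w) → N (s :: w) = N (sweep phi (s :: N w))) ∧
    (one ∉ sweep phi (s :: N w) → N (s :: w) = sweep phi (s :: N w))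

/-- The minimal length of an `S`-word representing `f`. -/
noncomputable def lenS {M : Type*} [Monoid M] (S : Set M) (f : M) : ℕ :=
  sInf {n | ∃ l : List M, l.length = n ∧ (∀ x ∈ l, x ∈ S) ∧ l.prod = f}

/-- The sum of the lengths of the components of a triple. -/
noncomputable def tripLen {M : Type*} [Monoid M] (S : Set M) (x : M × M × M) : ℕ :=
  lenS S x.1 + lenS S x.2.1 + lenS S x.2.2

/-- A factorability structure `η` on a monoid `M` with generating subset `S`
(containing `1`): `η = (η', η̄)` is a factorisation map such that, for
`F = η ∘ μ`, on every triple the maps `F₁F₂F₁F₂`, `F₂F₁F₂`, `F₂F₁F₂F₁`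
coincide or each reduces the total length. -/
structure Factorability {M : Type*} [Monoid M] (S : Set M) (eta : M → M × M) : Prop where
  gen : ∀ f : M, ∃ l : List M, (∀ x ∈ l, x ∈ S) ∧ l.prod = f
  one_mem : (1 : M) ∈ S
  eta_one : eta 1 = (1, 1)
  head_mem : ∀ f : M, f ≠ 1 → (eta f).1 ∈ S ∧ (eta f).1 ≠ 1
  split : ∀ f : M, f ≠ 1 → (eta f).1 * (eta f).2 = f
  geodesic : ∀ f : M, f ≠ 1 → lenS S f = lenS S (eta f).1 + lenS S (eta f).2
  axm : ∀ x : M × M × M,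
    (C2121 (fun p : M × M => eta (p.1 * p.2)) x = C212 (fun p : M × M => eta (p.1 * p.2)) x ∧
      C1212 (fun p : M × M => eta (p.1 * p.2)) x = C212 (fun p : M × M => eta (p.1 * p.2)) x) ∨
    (tripLen S (C2121 (fun p : M × M => eta (p.1 * p.2)) x) < tripLen S x ∧
      tripLen S (C212 (fun p : M × M => eta (p.1 * p.2)) x) < tripLen S x ∧
      tripLen S (C1212 (fun p : M × M => eta (p.1 * p.2)) x) < tripLen S x)

private theorem prodExt {A B : Type*} {p q : A × B} (h1 : p.1 = q.1) (h2 : p.2 = q.2) :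
    p = q := by
  cases p; cases q; simp_all

section MLevel

variable {M : Type*} [Monoid M] {S : Set M} {eta : M → M × M}

theorem lenS_le_one {x : M} (hx : x ∈ S) : lenS S x ≤ 1 :=
  Nat.sInf_le ⟨[x], rfl, by simpa using hx, by simp⟩

theorem lenS_one : lenS S (1 : M) = 0 :=
  Nat.eq_zero_of_le_zero (Nat.sInf_le ⟨[], rfl, by simp, by simp⟩)

theorem eq_one_of_lenS (hfac : Factorability S eta) {x : M} (h : lenS S x = 0) : x = 1 := by
  have hne : {n | ∃ l : List M, l.length = n ∧ (∀ y ∈ l, y ∈ S) ∧ l.prod = x}.Nonempty := by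
    obtain ⟨l, hl, hp⟩ := hfac.gen x
    exact ⟨l.length, l, rfl, hl, hp⟩
  have hmem : lenS S x ∈ {n | ∃ l : List M, l.length = n ∧ (∀ y ∈ l, y ∈ S) ∧ l.prod = x} :=
    Nat.sInf_mem hne
  rw [h] at hmem
  obtain ⟨l, hl0, -, hp⟩ := hmem
  rw [List.length_eq_zero_iff.mp hl0] at hp
  simpa using hp.symm

theorem lenS_mem_S (hfac : Factorability S eta) {x : M} (hx : x ∈ S) (h1 : x ≠ 1) :
    lenS S x = 1 := by
  have h2 := lenS_le_one hx
  have h3 : lenS S x ≠ 0 := fun h => h1 (eq_one_of_lenS hfac h)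
  omega

theorem eta_mem_S (hfac : Factorability S eta) {x : M} (hx : x ∈ S) : eta x = (x, 1) := by
  by_cases h1 : x = 1
  · subst h1; exact hfac.eta_one
  · obtain ⟨hm, hne⟩ := hfac.head_mem x h1
    have hs := hfac.split x h1
    have hg := hfac.geodesic x h1
    rw [lenS_mem_S hfac hx h1, lenS_mem_S hfac hm hne] at hg
    have h3 : (eta x).2 = 1 := eq_one_of_lenS hfac (by omega)
    rw [h3, mul_one] at hs
    exact prodExt hs h3

theorem eta_prod (hfac : Factorability S eta) (f : M) : (eta f).1 * (eta f).2 = f := by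
  by_cases h : f = 1
  · subst h; rw [hfac.eta_one]; simp
  · exact hfac.split f h

theorem nf3 (hfac : Factorability S eta) {p q r : M}
    (hp : p ∈ S) (hq : q ∈ S) (hr : r ∈ S)
    (hp1 : p ≠ 1) (hq1 : q ≠ 1) (hr1 : r ≠ 1)
    (hpq : eta (p * q) = (p, q)) (hqr : eta (q * r) = (q, r)) :
    eta (p * (q * r)) = (p, q * r) := by
  have hqr1 : q * r ≠ 1 := by
    intro h; rw [h, hfac.eta_one] at hqr
    exact hq1 (congrArg Prod.fst hqr).symm
  have hC : C1212 (fun pr : M × M => eta (pr.1 * pr.2)) (1, p, q * r) = (p, q, r) := by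
    simp only [C1212, C212, app1, app2, Function.comp_apply, one_mul,
      eta_mem_S hfac hp, hqr, hpq]
  rcases hfac.axm (1, p, q * r) with ⟨-, h2⟩ | ⟨-, -, h3⟩
  · rw [hC] at h2
    by_cases hf : p * (q * r) = 1
    · exfalso
      have hz : C212 (fun pr : M × M => eta (pr.1 * pr.2)) (1, p, q * r) = (1, 1, 1) := by
        simp only [C212, app1, app2, Function.comp_apply, one_mul, hf, hfac.eta_one, mul_one]
      rw [hz] at h2
      exact hp1 (congrArg Prod.fst h2)
    · obtain ⟨hdS, hd1⟩ := hfac.head_mem _ hf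
      have hC2 : C212 (fun pr : M × M => eta (pr.1 * pr.2)) (1, p, q * r) =
          ((eta (p * (q * r))).1, eta ((eta (p * (q * r))).2)) := by
        simp only [C212, app1, app2, Function.comp_apply, one_mul, eta_mem_S hfac hdS]
      rw [hC2] at h2
      have e1 : p = (eta (p * (q * r))).1 := congrArg Prod.fst h2
      have e2 : ((q, r) : M × M) = eta ((eta (p * (q * r))).2) := congrArg Prod.snd h2
      have hg1 : (eta (p * (q * r))).2 ≠ 1 := by
        intro h; rw [h, hfac.eta_one] at e2
        exact hq1 (congrArg Prod.fst e2)
      have e3 : q * r = (eta (p * (q * r))).2 := by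
        have hs := hfac.split _ hg1
        rw [← e2] at hs
        exact hs
      exact (prodExt e1 e3).symm
  · exfalso
    rw [hC] at h3
    have hlqr : lenS S (q * r) = 2 := by
      rw [hfac.geodesic _ hqr1, hqr, lenS_mem_S hfac hq hq1, lenS_mem_S hfac hr hr1]
    simp only [tripLen] at h3
    rw [lenS_mem_S hfac hp hp1, lenS_mem_S hfac hq hq1, lenS_mem_S hfac hr hr1,
      lenS_one, hlqr] at h3
    omega

theorem pn_canon (hfac : Factorability S eta) {p q r : M}
    (hp : p ∈ S) (hq : q ∈ S) (hr : r ∈ S)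
    (hpq : eta (p * q) = (p, q)) (hqr : eta (q * r) = (q, r))
    (h12 : p = 1 → q = 1) (h23 : q = 1 → r = 1) :
    (eta (p * (q * r))).1 = p ∧ (eta ((eta (p * (q * r))).2)).1 = q ∧
      (eta ((eta (p * (q * r))).2)).2 = r := by
  by_cases hp1 : p = 1
  · have hq1 := h12 hp1; have hr1 := h23 hq1
    subst hp1; subst hq1; subst hr1
    simp [hfac.eta_one]
  by_cases hq1 : q = 1
  · have hr1 := h23 hq1
    subst hq1; subst hr1
    simp [hfac.eta_one, eta_mem_S hfac hp]
  by_cases hr1 : r = 1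
  · subst hr1
    rw [mul_one, hpq]
    simp [hpq, eta_mem_S hfac hq]
  · rw [nf3 hfac hp hq hr hp1 hq1 hr1 hpq hqr]
    simp [hqr]

end MLevel

/-- if `(M, S, η)` is a factorable monoid, then the quadratic
normalisation `(S, N_phi')` corresponding to `η` is of class `(5,4)`. -/
theorem factorable_gives_class54 {M : Type*} [Monoid M] (S : Set M)
    (eta : M → M × M) (hfac : Factorability S eta)
    (e : ↥S) (he : (e : M) = 1)
    (phi : ↥S × ↥S → ↥S × ↥S)
    (hphi : ∀ p : ↥S × ↥S, (((phi p).1 : M), ((phi p).2 : M)) = eta ((p.1 : M) * (p.2 : M)))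
    (N : List ↥S → List ↥S) (hN : IsNormMap e phi N)
    (N' : List ↥S → List ↥S)
    (hN' : ∀ w : List ↥S, N' w = N w ++ List.replicate (w.length - (N w).length) e) :
    IsClass N' 5 4 := by
  classical
  obtain ⟨hN0, hNdel, hNrec⟩ := hN
  -- basic facts
  have heq : ∀ x : ↥S, x = e ↔ (x : M) = 1 := by
    intro x
    constructor
    · rintro rfl; exact he
    · intro h; exact Subtype.ext (h.trans he.symm)
  have hphi1 : ∀ a b : ↥S, ((phi (a, b)).1 : M) = (eta ((a : M) * (b : M))).1 :=
    fun a b => congrArg Prod.fst (hphi (a, b))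
  have hphi2 : ∀ a b : ↥S, ((phi (a, b)).2 : M) = (eta ((a : M) * (b : M))).2 :=
    fun a b => congrArg Prod.snd (hphi (a, b))
  have hprodphi : ∀ a b : ↥S, ((phi (a, b)).1 : M) * ((phi (a, b)).2 : M) = (a : M) * b := by
    intro a b
    rw [hphi1, hphi2, eta_prod hfac]
  have hidem : ∀ a b : ↥S, phi ((phi (a, b)).1, (phi (a, b)).2) = phi (a, b) := by
    intro a b
    refine prodExt (Subtype.ext ?_) (Subtype.ext ?_)
    · rw [hphi1 (phi (a, b)).1 (phi (a, b)).2, hprodphi a b]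
      exact (hphi1 a b).symm
    · rw [hphi2 (phi (a, b)).1 (phi (a, b)).2, hprodphi a b]
      exact (hphi2 a b).symm
  have hpe : ∀ a : ↥S, phi (a, e) = (a, e) := by
    intro a
    refine prodExt (Subtype.ext ?_) (Subtype.ext ?_)
    · rw [hphi1, he, mul_one, eta_mem_S hfac a.2]
    · rw [hphi2, he, mul_one, eta_mem_S hfac a.2]
  have hpe' : ∀ a : ↥S, phi (e, a) = (a, e) := by
    intro a
    refine prodExt (Subtype.ext ?_) (Subtype.ext ?_)
    · rw [hphi1, he, one_mul, eta_mem_S hfac a.2]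
    · rw [hphi2, he, one_mul, eta_mem_S hfac a.2]
  have hfst : ∀ a b : ↥S, (phi (a, b)).1 = e → (phi (a, b)).2 = e := by
    intro a b h
    have h1 : (eta ((a : M) * b)).1 = 1 := by rw [← hphi1]; exact (heq _).mp h
    have hab : (a : M) * b = 1 := by
      by_contra hc; exact (hfac.head_mem _ hc).2 h1
    rw [heq, hphi2, hab, hfac.eta_one]
  -- basic N facts
  have hNe1 : N [e] = [] := by
    have h := hNdel [] []
    simpa [hN0] using h
  have hNa : ∀ a : ↥S, a ≠ e → N [a] = [a] := by
    intro a ha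
    have h := (hNrec a []).2
    rw [hN0] at h
    simp only [sweep] at h
    refine h ?_
    simp only [List.mem_singleton]
    exact fun hh => ha hh.symm
  have hsweep2 : ∀ a b : ↥S, sweep phi [a, b] = [(phi (a, b)).1, (phi (a, b)).2] := by
    intro a b; simp [sweep]
  have hsweep3 : ∀ a b c : ↥S, sweep phi [a, b, c] =
      [(phi (a, b)).1, (phi ((phi (a, b)).2, c)).1, (phi ((phi (a, b)).2, c)).2] := by
    intro a b c; simp [sweep]
  -- pair normalisation
  have hpairN : ∀ a b : ↥S,
      ((phi (a, b)).2 = e ∧ (phi (a, b)).1 = e ∧ N [a, b] = []) ∨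
      ((phi (a, b)).2 = e ∧ (phi (a, b)).1 ≠ e ∧ N [a, b] = [(phi (a, b)).1]) ∨
      ((phi (a, b)).2 ≠ e ∧ (phi (a, b)).1 ≠ e ∧
        N [a, b] = [(phi (a, b)).1, (phi (a, b)).2]) := by
    intro a b
    by_cases hb : b = e
    · have hN2 : N [a, e] = N [a] := by
        have h := hNdel [a] []
        simpa using h
      rw [hb, hpe a]
      by_cases ha : a = e
      · left
        rw [ha]
        have hN2e : N [e, e] = N [e] := by
          have h := hNdel [e] []
          simpa using h
        exact ⟨rfl, rfl, by rw [hN2e, hNe1]⟩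
      · right; left
        exact ⟨rfl, ha, by rw [hN2, hNa a ha]⟩
    · have hb1 : N [b] = [b] := hNa b hb
      have hrec := hNrec a [b]
      rw [hb1, hsweep2 a b] at hrec
      by_cases hye : (phi (a, b)).2 = e
      · by_cases hxe : (phi (a, b)).1 = e
        · left
          refine ⟨hye, hxe, ?_⟩
          have h1 := hrec.1 (by simp [hxe])
          rw [h1, hxe, hye]
          have h2 : N [e, e] = N [e] := by
            have := hNdel [] [e]
            simpa using this
          rw [h2, hNe1]
        · right; left
          refine ⟨hye, hxe, ?_⟩
          have h1 := hrec.1 (by simp [hye])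
          rw [h1, hye]
          have h2 : N [(phi (a, b)).1, e] = N [(phi (a, b)).1] := by
            have := hNdel [(phi (a, b)).1] []
            simpa using this
          rw [h2, hNa _ hxe]
      · have hxe : (phi (a, b)).1 ≠ e := fun h => hye (hfst a b h)
        right; right
        refine ⟨hye, hxe, ?_⟩
        refine hrec.2 ?_
        simp only [List.mem_cons, List.mem_singleton, List.not_mem_nil]
        push_neg
        exact ⟨fun h => hxe h.symm, fun h => hye h.symm, trivial⟩
  have hpairN' : ∀ a b : ↥S, N' [a, b] = [(phi (a, b)).1, (phi (a, b)).2] := by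
    intro a b
    rcases hpairN a b with ⟨h2, h1, hn⟩ | ⟨h2, h1, hn⟩ | ⟨h2, h1, hn⟩
    · rw [hN' [a, b], hn, h1, h2]; rfl
    · rw [hN' [a, b], hn, h2]; rfl
    · rw [hN' [a, b], hn]; rfl
  -- step lemmas for applyAt
  have hstep1 : ∀ x y z : ↥S, applyAt N' 1 [x, y, z] =
      [(phi (x, y)).1, (phi (x, y)).2, z] := by
    intro x y z
    rw [show applyAt N' 1 [x, y, z] = N' [x, y] ++ [z] from rfl, hpairN']
    rfl
  have hstep2 : ∀ x y z : ↥S, applyAt N' 2 [x, y, z] =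
      [x, (phi (y, z)).1, (phi (y, z)).2] := by
    intro x y z
    rw [show applyAt N' 2 [x, y, z] = [x] ++ N' [y, z] ++ [] from rfl, hpairN']
    rfl
  -- coercion transfer
  have hcoe1 : ∀ t : ↥S × ↥S × ↥S,
      ((((app1 phi t).1 : M), ((app1 phi t).2.1 : M), ((app1 phi t).2.2 : M)) : M × M × M) =
        app1 (fun pr : M × M => eta (pr.1 * pr.2)) ((t.1 : M), (t.2.1 : M), (t.2.2 : M)) := by
    intro t
    simp only [app1]
    exact prodExt (hphi1 t.1 t.2.1) (prodExt (hphi2 t.1 t.2.1) rfl)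
  have hcoe2 : ∀ t : ↥S × ↥S × ↥S,
      ((((app2 phi t).1 : M), ((app2 phi t).2.1 : M), ((app2 phi t).2.2 : M)) : M × M × M) =
        app2 (fun pr : M × M => eta (pr.1 * pr.2)) ((t.1 : M), (t.2.1 : M), (t.2.2 : M)) := by
    intro t
    simp only [app2]
    exact prodExt rfl (prodExt (hphi1 t.2.1 t.2.2) (hphi2 t.2.1 t.2.2))
  have hcoe212 : ∀ t : ↥S × ↥S × ↥S,
      ((((C212 phi t).1 : M), ((C212 phi t).2.1 : M), ((C212 phi t).2.2 : M)) : M × M × M) =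
        C212 (fun pr : M × M => eta (pr.1 * pr.2)) ((t.1 : M), (t.2.1 : M), (t.2.2 : M)) := by
    intro t
    simp only [C212, Function.comp_apply]
    rw [hcoe2, hcoe1, hcoe2]
  have hcoe2121 : ∀ t : ↥S × ↥S × ↥S,
      ((((C2121 phi t).1 : M), ((C2121 phi t).2.1 : M), ((C2121 phi t).2.2 : M)) : M × M × M) =
        C2121 (fun pr : M × M => eta (pr.1 * pr.2)) ((t.1 : M), (t.2.1 : M), (t.2.2 : M)) := by
    intro t
    simp only [C2121, Function.comp_apply]
    rw [hcoe1, hcoe212]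
  -- no-drop lemma
  have hnodrop : ∀ t : ↥S × ↥S × ↥S,
      (C212 phi t).1 ≠ e → (C212 phi t).2.1 ≠ e → (C212 phi t).2.2 ≠ e →
      C2121 phi t = C212 phi t := by
    intro t h1 h2 h3
    rcases hfac.axm ((t.1 : M), (t.2.1 : M), (t.2.2 : M)) with ⟨hco, -⟩ | ⟨-, hdec, -⟩
    · rw [← hcoe2121 t, ← hcoe212 t] at hco
      exact prodExt (Subtype.ext (congrArg Prod.fst hco))
        (prodExt (Subtype.ext (congrArg Prod.fst (congrArg Prod.snd hco)))
          (Subtype.ext (congrArg Prod.snd (congrArg Prod.snd hco))))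
    · exfalso
      rw [← hcoe212 t] at hdec
      have e1 : lenS S ((C212 phi t).1 : M) = 1 :=
        lenS_mem_S hfac (C212 phi t).1.2 (fun h => h1 ((heq _).mpr h))
      have e2 : lenS S ((C212 phi t).2.1 : M) = 1 :=
        lenS_mem_S hfac (C212 phi t).2.1.2 (fun h => h2 ((heq _).mpr h))
      have e3 : lenS S ((C212 phi t).2.2 : M) = 1 :=
        lenS_mem_S hfac (C212 phi t).2.2.2 (fun h => h3 ((heq _).mpr h))
      have f1 : lenS S (t.1 : M) ≤ 1 := lenS_le_one t.1.2
      have f2 : lenS S (t.2.1 : M) ≤ 1 := lenS_le_one t.2.1.2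
      have f3 : lenS S (t.2.2 : M) ≤ 1 := lenS_le_one t.2.2.2
      simp only [tripLen] at hdec
      rw [e1, e2, e3] at hdec
      omega
  -- the triple normal form computation
  have hNtrip : ∀ a b c : ↥S, N' [a, b, c] =
      [(C2121 phi (a, b, c)).1, (C2121 phi (a, b, c)).2.1, (C2121 phi (a, b, c)).2.2] := by
    intro a b c
    show N' [a, b, c] =
      [(phi ((phi (a, (phi (b, c)).1)).1,
          (phi ((phi (a, (phi (b, c)).1)).2, (phi (b, c)).2)).1)).1,
       (phi ((phi (a, (phi (b, c)).1)).1,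
          (phi ((phi (a, (phi (b, c)).1)).2, (phi (b, c)).2)).1)).2,
       (phi ((phi (a, (phi (b, c)).1)).2, (phi (b, c)).2)).2]
    rcases hpairN b c with ⟨hp2, hp1, hn⟩ | ⟨hp2, hp1, hn⟩ | ⟨hp2, hp1, hn⟩
    · -- N [b,c] = [], phi (b,c) = (e,e)
      have hrec := hNrec a [b, c]
      rw [hn] at hrec
      simp only [sweep] at hrec
      by_cases ha : a = e
      · have h1 : N [a, b, c] = N [a] := hrec.1 (by simp [ha])
        have h2 : N [a] = [] := by rw [ha]; exact hNe1
        have hlhs : N' [a, b, c] = [e, e, e] := by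
          rw [hN' [a, b, c], h1, h2]; rfl
        rw [hlhs, ha]
        simp [hp1, hp2, hpe]
      · have h1 : N [a, b, c] = [a] := hrec.2 (by simp [Ne.symm ha])
        have hlhs : N' [a, b, c] = [a, e, e] := by
          rw [hN' [a, b, c], h1]; rfl
        rw [hlhs]
        simp [hp1, hp2, hpe]
    · -- N [b,c] = [p.1], p.2 = e
      have hrec := hNrec a [b, c]
      rw [hn, hsweep2 a (phi (b, c)).1] at hrec
      by_cases hq1 : (phi (a, (phi (b, c)).1)).1 = e
      · have hq2 : (phi (a, (phi (b, c)).1)).2 = e := hfst _ _ hq1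
        have h1 := hrec.1 (by simp [hq1])
        rw [hq1, hq2] at h1
        have h2 : N [e, e] = [] := by
          have h3 := hNdel [e] []
          simpa [hNe1] using h3
        have hlhs : N' [a, b, c] = [e, e, e] := by
          rw [hN' [a, b, c], h1.trans h2]; rfl
        rw [hlhs]
        simp [hp2, hq1, hq2, hpe]
      · by_cases hq2 : (phi (a, (phi (b, c)).1)).2 = e
        · have h1 := hrec.1 (by simp [hq2])
          rw [hq2] at h1
          have h2 : N [(phi (a, (phi (b, c)).1)).1, e] = [(phi (a, (phi (b, c)).1)).1] := by
            have h3 := hNdel [(phi (a, (phi (b, c)).1)).1] []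
            simpa [hNa _ hq1] using h3
          have hlhs : N' [a, b, c] = [(phi (a, (phi (b, c)).1)).1, e, e] := by
            rw [hN' [a, b, c], h1.trans h2]; rfl
          rw [hlhs]
          simp [hp2, hq2, hpe]
        · have h1 := hrec.2 (by simp [Ne.symm hq1, Ne.symm hq2])
          have hlhs : N' [a, b, c] =
              [(phi (a, (phi (b, c)).1)).1, (phi (a, (phi (b, c)).1)).2, e] := by
            rw [hN' [a, b, c], h1]; rfl
          rw [hlhs]
          simp [hp2, hpe, hidem]
    · -- N [b,c] = [p.1, p.2], both nontrivial
      have hrec := hNrec a [b, c]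
      rw [hn, hsweep3 a (phi (b, c)).1 (phi (b, c)).2] at hrec
      by_cases hq1 : (phi (a, (phi (b, c)).1)).1 = e
      · have hq2 : (phi (a, (phi (b, c)).1)).2 = e := hfst _ _ hq1
        have hu : phi ((phi (a, (phi (b, c)).1)).2, (phi (b, c)).2) = ((phi (b, c)).2, e) := by
          rw [hq2]; exact hpe' _
        have h1 := hrec.1 (by simp [hq1])
        rw [hq1] at h1
        simp only [hu] at h1
        have h2 : N [e, (phi (b, c)).2, e] = [(phi (b, c)).2] := by
          have h3 := hNdel [] [(phi (b, c)).2, e]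
          have h4 := hNdel [(phi (b, c)).2] []
          simp at h3 h4
          rw [h3, h4]
          exact hNa _ hp2
        have hlhs : N' [a, b, c] = [(phi (b, c)).2, e, e] := by
          rw [hN' [a, b, c], h1.trans h2]; rfl
        rw [hlhs]
        simp [hq1, hq2, hu, hpe']
      · by_cases hm1 : (phi ((phi (a, (phi (b, c)).1)).2, (phi (b, c)).2)).1 = e
        · have hm2 : (phi ((phi (a, (phi (b, c)).1)).2, (phi (b, c)).2)).2 = e :=
            hfst _ _ hm1
          have h1 := hrec.1 (by simp [hm1])
          rw [hm1, hm2] at h1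
          have h2 : N [(phi (a, (phi (b, c)).1)).1, e, e] =
              [(phi (a, (phi (b, c)).1)).1] := by
            have h3 := hNdel [(phi (a, (phi (b, c)).1)).1] [e]
            have h4 := hNdel [(phi (a, (phi (b, c)).1)).1] []
            simp at h3 h4
            rw [h3, h4]
            exact hNa _ hq1
          have hlhs : N' [a, b, c] = [(phi (a, (phi (b, c)).1)).1, e, e] := by
            rw [hN' [a, b, c], h1.trans h2]; rfl
          rw [hlhs]
          simp [hm1, hm2, hpe]
        · by_cases hc2 : (phi ((phi (a, (phi (b, c)).1)).2, (phi (b, c)).2)).2 = e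
          · have h1 := hrec.1 (by simp [hc2])
            rw [hc2] at h1
            have h2 : N [(phi (a, (phi (b, c)).1)).1,
                (phi ((phi (a, (phi (b, c)).1)).2, (phi (b, c)).2)).1, e] =
                N [(phi (a, (phi (b, c)).1)).1,
                  (phi ((phi (a, (phi (b, c)).1)).2, (phi (b, c)).2)).1] := by
              have h3 := hNdel [(phi (a, (phi (b, c)).1)).1,
                (phi ((phi (a, (phi (b, c)).1)).2, (phi (b, c)).2)).1] []
              simpa using h3
            rcases hpairN (phi (a, (phi (b, c)).1)).1
                (phi ((phi (a, (phi (b, c)).1)).2, (phi (b, c)).2)).1 with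
              ⟨g2, g1, gn⟩ | ⟨g2, g1, gn⟩ | ⟨g2, g1, gn⟩
            · have hlhs : N' [a, b, c] = [e, e, e] := by
                rw [hN' [a, b, c], (h1.trans h2).trans gn]; rfl
              rw [hlhs]
              simp [hc2, g1, g2]
            · have hlhs : N' [a, b, c] = [(phi ((phi (a, (phi (b, c)).1)).1,
                  (phi ((phi (a, (phi (b, c)).1)).2, (phi (b, c)).2)).1)).1, e, e] := by
                rw [hN' [a, b, c], (h1.trans h2).trans gn]; rfl
              rw [hlhs]
              simp [hc2, g2]
            · have hlhs : N' [a, b, c] = [(phi ((phi (a, (phi (b, c)).1)).1,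
                  (phi ((phi (a, (phi (b, c)).1)).2, (phi (b, c)).2)).1)).1,
                  (phi ((phi (a, (phi (b, c)).1)).1,
                  (phi ((phi (a, (phi (b, c)).1)).2, (phi (b, c)).2)).1)).2, e] := by
                rw [hN' [a, b, c], (h1.trans h2).trans gn]; rfl
              rw [hlhs]
              simp [hc2]
          · have h1 := hrec.2 (by simp [Ne.symm hq1, Ne.symm hm1, Ne.symm hc2])
            have hlhs : N' [a, b, c] = [(phi (a, (phi (b, c)).1)).1,
                (phi ((phi (a, (phi (b, c)).1)).2, (phi (b, c)).2)).1,
                (phi ((phi (a, (phi (b, c)).1)).2, (phi (b, c)).2)).2] := by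
              rw [hN' [a, b, c], h1]; rfl
            have hnd := hnodrop (a, b, c) hq1 hm1 hc2
            have e1' := congrArg Prod.fst hnd
            have e2' := congrArg (fun x : ↥S × ↥S × ↥S => x.2.1) hnd
            have e1 : (phi ((phi (a, (phi (b, c)).1)).1,
                (phi ((phi (a, (phi (b, c)).1)).2, (phi (b, c)).2)).1)).1 =
                (phi (a, (phi (b, c)).1)).1 := e1'
            have e2 : (phi ((phi (a, (phi (b, c)).1)).1,
                (phi ((phi (a, (phi (b, c)).1)).2, (phi (b, c)).2)).1)).2 =
                (phi ((phi (a, (phi (b, c)).1)).2, (phi (b, c)).2)).1 := e2'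
            rw [hlhs, e1, e2]
  -- structure of C2121 output: padded normal triple
  have hstr : ∀ t : ↥S × ↥S × ↥S,
      eta (((C2121 phi t).1 : M) * ((C2121 phi t).2.1 : M)) =
        (((C2121 phi t).1 : M), ((C2121 phi t).2.1 : M)) ∧
      eta (((C2121 phi t).2.1 : M) * ((C2121 phi t).2.2 : M)) =
        (((C2121 phi t).2.1 : M), ((C2121 phi t).2.2 : M)) ∧
      (((C2121 phi t).1 : M) = 1 → ((C2121 phi t).2.1 : M) = 1) ∧
      (((C2121 phi t).2.1 : M) = 1 → ((C2121 phi t).2.2 : M) = 1) := by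
    intro t
    have c2 : (C212 phi t).2.1 = e → (C212 phi t).2.2 = e := by
      intro h
      exact hfst (app1 phi (app2 phi t)).2.1 (app1 phi (app2 phi t)).2.2 h
    have c1 : (C212 phi t).1 = e → (C212 phi t).2.2 = e := by
      intro h
      have h2 : (phi ((app2 phi t).1, (app2 phi t).2.1)).2 = e :=
        hfst (app2 phi t).1 (app2 phi t).2.1 h
      have h3 : (C212 phi t).2 = ((app1 phi (app2 phi t)).2.2, e) := by
        show phi ((app1 phi (app2 phi t)).2.1, (app1 phi (app2 phi t)).2.2) = _
        rw [show (app1 phi (app2 phi t)).2.1 = e from h2]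
        exact hpe' _
      exact congrArg Prod.snd h3
    refine ⟨?_, ?_, ?_, ?_⟩
    · show eta (((phi ((C212 phi t).1, (C212 phi t).2.1)).1 : M) *
          ((phi ((C212 phi t).1, (C212 phi t).2.1)).2 : M)) = _
      have h := hphi ((phi ((C212 phi t).1, (C212 phi t).2.1)).1,
        (phi ((C212 phi t).1, (C212 phi t).2.1)).2)
      rw [hidem (C212 phi t).1 (C212 phi t).2.1] at h
      exact h.symm
    · by_cases hz : (C212 phi t).2.2 = e
      · show eta (((phi ((C212 phi t).1, (C212 phi t).2.1)).2 : M) * ((C212 phi t).2.2 : M)) = _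
        have hz1 : ((C212 phi t).2.2 : M) = 1 := (heq _).mp hz
        rw [hz1, mul_one, eta_mem_S hfac (phi ((C212 phi t).1, (C212 phi t).2.1)).2.2]
        exact prodExt rfl hz1.symm
      · have h21 : (C212 phi t).2.1 ≠ e := fun h => hz (c2 h)
        have h1 : (C212 phi t).1 ≠ e := fun h => hz (c1 h)
        have hnd := hnodrop t h1 h21 hz
        rw [hnd]
        show eta (((phi ((app1 phi (app2 phi t)).2.1, (app1 phi (app2 phi t)).2.2)).1 : M) *
          ((phi ((app1 phi (app2 phi t)).2.1, (app1 phi (app2 phi t)).2.2)).2 : M)) = _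
        have h := hphi ((phi ((app1 phi (app2 phi t)).2.1, (app1 phi (app2 phi t)).2.2)).1,
          (phi ((app1 phi (app2 phi t)).2.1, (app1 phi (app2 phi t)).2.2)).2)
        rw [hidem (app1 phi (app2 phi t)).2.1 (app1 phi (app2 phi t)).2.2] at h
        exact h.symm
    · intro h
      have h1 : (C2121 phi t).1 = e := (heq _).mpr h
      have h2 : (phi ((C212 phi t).1, (C212 phi t).2.1)).2 = e :=
        hfst (C212 phi t).1 (C212 phi t).2.1 h1
      exact (heq _).mp h2
    · intro h
      by_cases hz : (C212 phi t).2.2 = e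
      · exact (heq _).mp hz
      · exfalso
        have h21 : (C212 phi t).2.1 ≠ e := fun hh => hz (c2 hh)
        have h1 : (C212 phi t).1 ≠ e := fun hh => hz (c1 hh)
        have hnd := hnodrop t h1 h21 hz
        rw [hnd] at h
        exact h21 ((heq _).mpr h)
  -- products preserved
  have hprod1 : ∀ t : ↥S × ↥S × ↥S,
      ((app1 phi t).1 : M) * (((app1 phi t).2.1 : M) * ((app1 phi t).2.2 : M)) =
        (t.1 : M) * ((t.2.1 : M) * (t.2.2 : M)) := by
    intro t
    simp only [app1]
    rw [← mul_assoc, hprodphi, mul_assoc]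
  have hprod2 : ∀ t : ↥S × ↥S × ↥S,
      ((app2 phi t).1 : M) * (((app2 phi t).2.1 : M) * ((app2 phi t).2.2 : M)) =
        (t.1 : M) * ((t.2.1 : M) * (t.2.2 : M)) := by
    intro t
    simp only [app2]
    rw [hprodphi]
  have hprodC : ∀ t : ↥S × ↥S × ↥S,
      ((C2121 phi t).1 : M) * (((C2121 phi t).2.1 : M) * ((C2121 phi t).2.2 : M)) =
        (t.1 : M) * ((t.2.1 : M) * (t.2.2 : M)) := by
    intro t
    simp only [C2121, C212, Function.comp_apply]
    rw [hprod1, hprod2, hprod1, hprod2]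
  -- the key left-absorption
  have hkey : ∀ t : ↥S × ↥S × ↥S, C2121 phi (app1 phi t) = C2121 phi t := by
    intro t
    obtain ⟨ha1, ha2, ha3, ha4⟩ := hstr (app1 phi t)
    obtain ⟨hb1, hb2, hb3, hb4⟩ := hstr t
    have hprodeq : ((C2121 phi (app1 phi t)).1 : M) *
        (((C2121 phi (app1 phi t)).2.1 : M) * ((C2121 phi (app1 phi t)).2.2 : M)) =
        ((C2121 phi t).1 : M) * (((C2121 phi t).2.1 : M) * ((C2121 phi t).2.2 : M)) := by
      rw [hprodC, hprodC, hprod1]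
    obtain ⟨u1, u2, u3⟩ := pn_canon hfac (C2121 phi (app1 phi t)).1.2
      (C2121 phi (app1 phi t)).2.1.2 (C2121 phi (app1 phi t)).2.2.2 ha1 ha2 ha3 ha4
    obtain ⟨v1, v2, v3⟩ := pn_canon hfac (C2121 phi t).1.2
      (C2121 phi t).2.1.2 (C2121 phi t).2.2.2 hb1 hb2 hb3 hb4
    rw [hprodeq] at u1 u2 u3
    exact prodExt (Subtype.ext (u1.symm.trans v1))
      (prodExt (Subtype.ext (u2.symm.trans v2)) (Subtype.ext (u3.symm.trans v3)))
  -- assemble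
  constructor
  · intro w hw
    obtain ⟨a, b, c, rfl⟩ := List.length_eq_three.mp hw
    have halt : altSeq 1 5 = [1, 2, 1, 2, 1] := rfl
    rw [halt]
    have h1 : applySeq N' [1, 2, 1, 2, 1] [a, b, c] =
        applySeq N' [2, 1, 2, 1] (applyAt N' 1 [a, b, c]) := rfl
    rw [h1, hstep1]
    have h2 : applySeq N' [2, 1, 2, 1] [(phi (a, b)).1, (phi (a, b)).2, c] =
        applyAt N' 1 (applyAt N' 2 (applyAt N' 1 (applyAt N' 2
          [(phi (a, b)).1, (phi (a, b)).2, c]))) := rfl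
    rw [h2, hstep2, hstep1, hstep2, hstep1, hNtrip a b c]
    have h3 : C2121 phi (app1 phi (a, b, c)) = C2121 phi (a, b, c) := hkey (a, b, c)
    have h4 : app1 phi (a, b, c) = ((phi (a, b)).1, (phi (a, b)).2, c) := rfl
    rw [h4] at h3
    rw [← h3]
    simp only [C2121, C212, app1, app2, Function.comp_apply]
  · intro w hw
    obtain ⟨a, b, c, rfl⟩ := List.length_eq_three.mp hw
    have halt : altSeq 2 4 = [2, 1, 2, 1] := rfl
    rw [halt]
    have h2 : applySeq N' [2, 1, 2, 1] [a, b, c] =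
        applyAt N' 1 (applyAt N' 2 (applyAt N' 1 (applyAt N' 2 [a, b, c]))) := rfl
    rw [h2, hstep2, hstep1, hstep2, hstep1, hNtrip a b c]
    simp only [C2121, C212, app1, app2, Function.comp_apply]
end
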